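/- Let p > 3, σ_c = 1/2 - 1/(p-1), and define f(η) = (2(p+1)/(p-3))·((1/2)η² - (2/(p+1))η^{(p+1)/2}) for η ≥ 0. Then f attains its maximum on [0,∞) at η = 1 with f(1) = 1, and for every ψ ∈ H¹(ℝ), M(ψ)^{(1-σ_c)/σ_c} E(ψ) / (M(φ₀)^{(1-σ_c)/σ_c} E(φ₀)) ≥ f(η), where η = ‖ψ‖_{L²}^{(1-σ_c)/σ_c} ‖ψ'‖_{L²} / (‖φ₀‖_{L²}^{(1-σ_c)/σ_c} ‖φ₀'‖_{L²}). -/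

import Mathlib

open MeasureTheory

def IsH1 (f f' : ℝ → ℂ) : Prop :=
  Continuous f ∧ AEStronglyMeasurable f' volume ∧
  (∀ x : ℝ, f x = f 0 + ∫ t in (0:ℝ)..x, f' t) ∧
  Integrable (fun x => ‖f x‖ ^ 2) ∧ Integrable (fun x => ‖f' x‖ ^ 2)

/-!
The energy bound is a consequence of the one-dimensional Gagliardo–Nirenberg inequality
`|ψ(0)|² ≤ ‖ψ‖ ‖ψ'‖`. For an absolutely continuous `ψ` the function `|ψ|²` is absolutely
continuous with derivative `2 Re(ψ̄ ψ')`; being integrable, it vanishes at `±∞`, so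
`2 |ψ(0)|² = ∫_{x<0} 2 Re(ψ̄ ψ') - ∫_{x>0} 2 Re(ψ̄ ψ') ≤ 2 ∫ |ψ| |ψ'|`, and Cauchy–Schwarz
finishes. Inserting `|ψ(0)|^{p+1} ≤ (‖ψ‖ ‖ψ'‖)^{(p+1)/2}` into `E(ψ)` and using the scaling of
the ground state, `φ₀(0)^{p-1} = 2`, the normalized energy is at least `f(η)`. Finally
`f ≤ 1 = f(1)` is Bernoulli's inequality `t^q ≥ 1 + q (t - 1)` for `t = η²`, `q = (p+1)/4`.
-/

open Set Filter

lemma MeasureTheory.Integrable.eq_zero_of_tendsto_atTop {E : Type*} [NormedAddCommGroup E]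
    {f : ℝ → E} {a : E} (hf : Integrable f) (h : Tendsto f atTop (nhds a)) : a = 0 :=
  (hf.integrableAtFilter atTop).eq_zero_of_tendsto (fun s hs => by
    obtain ⟨b, hb⟩ := mem_atTop_sets.1 hs
    exact top_le_iff.1 (Real.volume_Ici (a := b) ▸ measure_mono hb)) h

lemma MeasureTheory.Integrable.eq_zero_of_tendsto_atBot {E : Type*} [NormedAddCommGroup E]
    {f : ℝ → E} {a : E} (hf : Integrable f) (h : Tendsto f atBot (nhds a)) : a = 0 :=
  (hf.integrableAtFilter atBot).eq_zero_of_tendsto (fun s hs => by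
    obtain ⟨b, hb⟩ := mem_atBot_sets.1 hs
    exact top_le_iff.1 (Real.volume_Iic (a := b) ▸ measure_mono hb)) h

namespace IsH1

variable {ψ ψ' : ℝ → ℂ}

lemma memLp_two (h : IsH1 ψ ψ') : MemLp ψ 2 :=
  (memLp_two_iff_integrable_sq_norm h.1.aestronglyMeasurable).2 h.2.2.2.1

lemma memLp_two_deriv (h : IsH1 ψ ψ') : MemLp ψ' 2 :=
  (memLp_two_iff_integrable_sq_norm h.2.1).2 h.2.2.2.2

lemma intervalIntegrable_deriv (h : IsH1 ψ ψ') (a b : ℝ) : IntervalIntegrable ψ' volume a b :=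
  ((h.memLp_two_deriv.locallyIntegrable one_le_two).integrableOn_isCompact
    isCompact_uIcc).intervalIntegrable

lemma ae_hasDerivAt (h : IsH1 ψ ψ') : ∀ᵐ x, HasDerivAt ψ (ψ' x) x := by
  filter_upwards [LocallyIntegrable.ae_hasDerivAt_integral
    (h.memLp_two_deriv.locallyIntegrable one_le_two)] with x hx
  rw [show ψ = fun y => ψ 0 + ∫ t in (0:ℝ)..y, ψ' t from funext h.2.2.1]
  exact (hx 0).const_add _

lemma absolutelyContinuousOnInterval_comp (h : IsH1 ψ ψ') (L : ℂ →L[ℝ] ℝ) (x : ℝ) :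
    AbsolutelyContinuousOnInterval (fun y => L (ψ y)) 0 x := by
  have hL : (fun y => L (ψ y)) = fun y => L (ψ 0) + ∫ t in (0:ℝ)..y, L (ψ' t) := by
    funext y
    rw [h.2.2.1 y, map_add, L.intervalIntegral_comp_comm (h.intervalIntegrable_deriv 0 y)]
  rw [hL]
  exact ((LipschitzWith.const (L (ψ 0))).lipschitzOnWith.absolutelyContinuousOnInterval).add
    (IntervalIntegrable.absolutelyContinuousOnInterval_intervalIntegral
      ⟨L.integrable_comp (h.intervalIntegrable_deriv 0 x).1,
        L.integrable_comp (h.intervalIntegrable_deriv 0 x).2⟩ (by simp))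

lemma absolutelyContinuousOnInterval_norm_sq (h : IsH1 ψ ψ') (x : ℝ) :
    AbsolutelyContinuousOnInterval (fun y => ‖ψ y‖ ^ 2) 0 x := by
  have hre := h.absolutelyContinuousOnInterval_comp Complex.reCLM x
  have him := h.absolutelyContinuousOnInterval_comp Complex.imCLM x
  have e : (fun y => ‖ψ y‖ ^ 2) = (fun y => Complex.reCLM (ψ y)) * (fun y => Complex.reCLM (ψ y))
      + (fun y => Complex.imCLM (ψ y)) * (fun y => Complex.imCLM (ψ y)) := by
    funext y
    simp [Complex.sq_norm, Complex.normSq_apply]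
  rw [e]
  exact (hre.mul hre).add (him.mul him)

lemma norm_sq_eq (h : IsH1 ψ ψ') (x : ℝ) :
    ‖ψ x‖ ^ 2 = ‖ψ 0‖ ^ 2 + ∫ t in (0:ℝ)..x, 2 * inner ℝ (ψ t) (ψ' t) := by
  rw [← sub_eq_iff_eq_add', ← (h.absolutelyContinuousOnInterval_norm_sq x).integral_deriv_eq_sub]
  refine intervalIntegral.integral_congr_ae ?_
  filter_upwards [h.ae_hasDerivAt] with t ht _
  exact ht.norm_sq.deriv

lemma integrable_norm_mul_norm (h : IsH1 ψ ψ') : Integrable (fun t => ‖ψ t‖ * ‖ψ' t‖) :=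
  h.memLp_two.norm.integrable_mul h.memLp_two_deriv.norm

lemma integral_norm_mul_norm_le (h : IsH1 ψ ψ') :
    ∫ t, ‖ψ t‖ * ‖ψ' t‖ ≤ Real.sqrt (∫ t, ‖ψ t‖ ^ 2) * Real.sqrt (∫ t, ‖ψ' t‖ ^ 2) := by
  have := integral_mul_norm_le_Lp_mul_Lq Real.HolderConjugate.two_two
    (by simpa using h.memLp_two) (by simpa using h.memLp_two_deriv)
  simpa [Real.sqrt_eq_rpow] using this

lemma norm_sq_zero_le_integral (h : IsH1 ψ ψ') :
    ‖ψ 0‖ ^ 2 ≤ ∫ t, ‖ψ t‖ * ‖ψ' t‖ := by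
  set g : ℝ → ℝ := fun t => 2 * inner ℝ (ψ t) (ψ' t)
  set G : ℝ → ℝ := fun t => 2 * (‖ψ t‖ * ‖ψ' t‖)
  have hG : Integrable G := h.integrable_norm_mul_norm.const_mul 2
  have hgG : ∀ t, |g t| ≤ G t := fun t => by
    simpa [g, G, abs_mul] using abs_real_inner_le_norm (ψ t) (ψ' t)
  have hg : Integrable g := hG.mono'
    ((h.1.aestronglyMeasurable.inner h.2.1).const_mul 2) (.of_forall hgG)
  have hψ : Integrable fun x => ‖ψ x‖ ^ 2 := h.2.2.2.1
  have right : ‖ψ 0‖ ^ 2 + ∫ t in Ioi 0, g t = 0 := hψ.eq_zero_of_tendsto_atTop <|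
    ((intervalIntegral_tendsto_integral_Ioi 0 hg.integrableOn tendsto_id).const_add _).congr
      fun x => (h.norm_sq_eq x).symm
  have left : ‖ψ 0‖ ^ 2 - ∫ t in Iic 0, g t = 0 := hψ.eq_zero_of_tendsto_atBot <|
    ((intervalIntegral_tendsto_integral_Iic 0 hg.integrableOn tendsto_id).const_sub _).congr
      fun x => by rw [h.norm_sq_eq x, intervalIntegral.integral_symm, sub_neg_eq_add]; rfl
  have hIic : ∫ t in Iic 0, g t ≤ ∫ t in Iic 0, G t :=
    setIntegral_mono hg.integrableOn hG.integrableOn fun t => (le_abs_self _).trans (hgG t)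
  have hIoi : -∫ t in Ioi 0, g t ≤ ∫ t in Ioi 0, G t := by
    rw [← integral_neg]
    exact setIntegral_mono hg.neg.integrableOn hG.integrableOn
      fun t => (neg_le_abs _).trans (hgG t)
  have hsplit := integral_add_compl (measurableSet_Iic (a := (0:ℝ))) hG
  rw [compl_Iic] at hsplit
  have : ∫ t, G t = 2 * ∫ t, ‖ψ t‖ * ‖ψ' t‖ := integral_const_mul _ _
  linarith

theorem norm_sq_zero_le (h : IsH1 ψ ψ') :
    ‖ψ 0‖ ^ 2 ≤ Real.sqrt (∫ t, ‖ψ t‖ ^ 2) * Real.sqrt (∫ t, ‖ψ' t‖ ^ 2) :=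
  h.norm_sq_zero_le_integral.trans h.integral_norm_mul_norm_le

end IsH1

lemma Real.rpow_mul_mul_rpow_of_add_eq_mul {m k a b c : ℝ} (hm : 0 ≤ m) (hk : 0 ≤ k)
    (hb : 0 < b) (hc : 0 < c) (habc : a + c = b * c) : m ^ a * (m * k) ^ c = (m ^ b * k) ^ c := by
  rw [Real.mul_rpow hm hk, Real.mul_rpow (Real.rpow_nonneg hm b) hk, ← mul_assoc,
    ← Real.rpow_add' hm (habc ▸ (mul_pos hb hc).ne'), ← Real.rpow_mul hm, habc]

noncomputable def gnProfile (p η : ℝ) : ℝ :=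
  (2 * (p+1) / (p-3)) * ((1/2) * η ^ 2 - (2/(p+1)) * η ^ ((p+1)/2))

lemma gnProfile_one {p : ℝ} (hp : 3 < p) : gnProfile p 1 = 1 := by
  have : p - 3 ≠ 0 := by linarith
  have : p + 1 ≠ 0 := by linarith
  rw [gnProfile, Real.one_rpow]
  field_simp
  ring

lemma gnProfile_le_one {p η : ℝ} (hp : 3 < p) (hη : 0 ≤ η) : gnProfile p η ≤ 1 := by
  have hpow : (η ^ 2) ^ ((p+1)/4) = η ^ ((p+1)/2) := by
    rw [← Real.rpow_natCast, ← Real.rpow_mul hη]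
    ring_nf
  have bernoulli := one_add_mul_self_le_rpow_one_add (s := η ^ 2 - 1) (by nlinarith)
    (p := (p+1)/4) (by linarith)
  rw [add_sub_cancel, hpow] at bernoulli
  have hp3 : 0 < p - 3 := by linarith
  have : gnProfile p η = ((p+1) * η ^ 2 - 4 * η ^ ((p+1)/2)) / (p-3) := by
    rw [gnProfile]
    field_simp
    ring
  rw [this, div_le_one hp3]
  linarith

lemma gnProfile_le {p m k P : ℝ} (hp : 3 < p) (hm : 0 ≤ m) (hk : 0 ≤ k) (hP : 0 ≤ P)
    (hPmk : P ^ 2 ≤ m * k) :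
    gnProfile p (m ^ ((p+1)/(p-3)) * k /
        (((2:ℝ) ^ ((1:ℝ)/(p-1))) ^ ((p+1)/(p-3)) * (2:ℝ) ^ ((1:ℝ)/(p-1)))) ≤
      (m ^ 2) ^ ((p+1)/(p-3)) * ((1/2) * k ^ 2 - (1/(p+1)) * P ^ (p+1)) /
        (((2:ℝ) ^ ((2:ℝ)/(p-1))) ^ ((p+1)/(p-3)) *
          ((2:ℝ) ^ ((2:ℝ)/(p-1)) * (p-3) / (2 * (p+1)))) := by
  have hp3 : 0 < p - 3 := by linarith
  have hp1 : 0 < p - 1 := by linarith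
  set r := (p+1)/(p-3) with hr
  set e := (p+1)/2 with he
  have hscale : ∀ c : ℝ, ((2:ℝ) ^ (c/(p-1))) ^ r * (2:ℝ) ^ (c/(p-1)) = (2:ℝ) ^ (2*c/(p-3)) := by
    intro c
    rw [← Real.rpow_mul zero_le_two, ← Real.rpow_add zero_lt_two, hr]
    congr 1
    field_simp
    ring
  -- `N = ‖φ₀‖^r ‖φ₀'‖`; the relation `N^e = 2 N²` is `φ₀(0)^(p-1) = 2` after scaling
  set N := (2:ℝ) ^ (2/(p-3)) with hN
  have hN0 : 0 < N := by positivity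
  have hN1 : ((2:ℝ) ^ ((1:ℝ)/(p-1))) ^ r * (2:ℝ) ^ ((1:ℝ)/(p-1)) = N := by
    rw [hscale, hN, mul_one]
  have hN2 : ((2:ℝ) ^ ((2:ℝ)/(p-1))) ^ r * (2:ℝ) ^ ((2:ℝ)/(p-1)) = N ^ 2 := by
    rw [hscale, hN, ← Real.rpow_natCast, ← Real.rpow_mul zero_le_two]
    ring_nf
  have hNe : N ^ e = 2 * N ^ 2 := by
    rw [hN, ← Real.rpow_mul zero_le_two, ← Real.rpow_natCast, ← Real.rpow_mul zero_le_two,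
      ← Real.rpow_one_add' zero_le_two (by positivity)]
    congr 1
    field_simp
    ring
  set η := m ^ r * k / N with hη
  have hη2 : η ^ 2 = (m ^ 2) ^ r * k ^ 2 / N ^ 2 := by
    rw [hη, div_pow, mul_pow, ← Real.rpow_natCast (m ^ r), ← Real.rpow_natCast m,
      ← Real.rpow_mul hm, ← Real.rpow_mul hm, mul_comm r]
  have hηe : (m ^ 2) ^ r * P ^ (p+1) ≤ 2 * N ^ 2 * η ^ e := by
    have hPe : P ^ (p+1) ≤ (m * k) ^ e := by
      rw [show p + 1 = 2 * e by ring, Real.rpow_mul hP]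
      norm_cast
      exact Real.rpow_le_rpow (by positivity) hPmk (by positivity)
    calc (m ^ 2) ^ r * P ^ (p+1) ≤ (m ^ 2) ^ r * (m * k) ^ e := by gcongr
      _ = (m ^ r * k) ^ e := by
        rw [← Real.rpow_natCast, ← Real.rpow_mul hm]
        exact Real.rpow_mul_mul_rpow_of_add_eq_mul hm hk (by positivity) (by positivity)
          (by rw [hr, he]; field_simp; ring)
      _ = 2 * N ^ 2 * η ^ e := by
        rw [hη, Real.div_rpow (by positivity) hN0.le, hNe]
        field_simp
  have hden : ((2:ℝ) ^ ((2:ℝ)/(p-1))) ^ r * ((2:ℝ) ^ ((2:ℝ)/(p-1)) * (p-3) / (2 * (p+1)))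
      = N ^ 2 * ((p-3) / (2 * (p+1))) := by
    rw [← hN2]; ring
  rw [hN1, ← hη, hden, gnProfile, hη2]
  calc 2 * (p+1) / (p-3) * (1/2 * ((m ^ 2) ^ r * k ^ 2 / N ^ 2) - 2/(p+1) * η ^ e)
      ≤ 2 * (p+1) / (p-3) * (1/2 * ((m ^ 2) ^ r * k ^ 2 / N ^ 2)
          - (m ^ 2) ^ r * P ^ (p+1) / ((p+1) * N ^ 2)) := by
        gcongr
        rw [div_le_iff₀ (by positivity)]
        have : 2/(p+1) * η ^ e * ((p+1) * N ^ 2) = 2 * N ^ 2 * η ^ e := by field_simp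
        linarith
    _ = _ := by field_simp

/-- For `p > 3` (so `σ_c = 1/2 - 1/(p-1)` and `(1-σ_c)/σ_c = (p+1)/(p-3)`), the function
`f(η) = (2(p+1)/(p-3))((1/2)η² - (2/(p+1))η^{(p+1)/2})` attains its maximum `1` on
`[0,∞)` at `η = 1`, and for every `ψ ∈ H¹(ℝ)`,
`M(ψ)^{(1-σ_c)/σ_c} E(ψ) / (M(φ₀)^{(1-σ_c)/σ_c} E(φ₀)) ≥ f(η)` where
`η = ‖ψ‖_{L²}^{(1-σ_c)/σ_c}‖ψ'‖_{L²} / (‖φ₀‖_{L²}^{(1-σ_c)/σ_c}‖φ₀'‖_{L²})`; here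
`‖φ₀‖_{L²} = ‖φ₀'‖_{L²} = 2^{1/(p-1)}` and `E(φ₀) = 2^{2/(p-1)}(p-3)/(2(p+1))` for the
ground state `φ₀(x) = 2^{1/(p-1)}e^{-|x|}`. -/
theorem stmt17 (p : ℝ) (hp : 3 < p) (f : ℝ → ℝ)
    (hf : ∀ η : ℝ, 0 ≤ η →
      f η = (2 * (p+1) / (p-3)) * ((1/2) * η ^ 2 - (2/(p+1)) * η ^ ((p+1)/2))) :
    (∀ η : ℝ, 0 ≤ η → f η ≤ 1) ∧ f 1 = 1 ∧
    ∀ ψ ψ' : ℝ → ℂ, IsH1 ψ ψ' →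
      f ((Real.sqrt (∫ x : ℝ, ‖ψ x‖ ^ 2) ^ ((p+1)/(p-3)) *
            Real.sqrt (∫ x : ℝ, ‖ψ' x‖ ^ 2)) /
          (((2:ℝ) ^ ((1:ℝ)/(p-1))) ^ ((p+1)/(p-3)) * (2:ℝ) ^ ((1:ℝ)/(p-1)))) ≤
        ((∫ x : ℝ, ‖ψ x‖ ^ 2) ^ ((p+1)/(p-3)) *
            ((1/2) * (∫ x : ℝ, ‖ψ' x‖ ^ 2) - (1/(p+1)) * ‖ψ 0‖ ^ (p+1))) /
          (((2:ℝ) ^ ((2:ℝ)/(p-1))) ^ ((p+1)/(p-3)) *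
            ((2:ℝ) ^ ((2:ℝ)/(p-1)) * (p-3) / (2 * (p+1)))) := by
  have hf : ∀ η, 0 ≤ η → f η = gnProfile p η := hf
  refine ⟨fun η hη => hf η hη ▸ gnProfile_le_one hp hη,
    hf 1 zero_le_one ▸ gnProfile_one hp, fun ψ ψ' hψ => ?_⟩
  have hM : 0 ≤ ∫ x, ‖ψ x‖ ^ 2 := integral_nonneg fun _ => by positivity
  have hK : 0 ≤ ∫ x, ‖ψ' x‖ ^ 2 := integral_nonneg fun _ => by positivity
  have key := gnProfile_le hp (Real.sqrt_nonneg _) (Real.sqrt_nonneg _) (norm_nonneg _)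
    hψ.norm_sq_zero_le
  rwa [Real.sq_sqrt hM, Real.sq_sqrt hK, ← hf _ (by positivity)] at key
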